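/- Let T: edges of the honeycomb lattice → ℂ satisfy the hexagon relation T(d)−T(a)=T(b)−T(e)=T(f)−T(c) for the edges a,…,f of every hexagon listed in clockwise order. Define T_CR on an edge e oriented in direction τ ∈ {1, e^{2πi/3}, e^{4πi/3}} by T_CR(e) = (4/3)·τ̄²·[T(e) + (ρ̄/4)(T(e_{τρ}) + T(e_{−τρ})) + (ρ/4)(T(e_{τρ̄}) + T(e_{−τρ̄}))], where ρ = e^{iπ/3} and e_{±τρ}, e_{±τρ̄} are the four edges adjacent to e labeled by their outward directions. Then the discrete contour integral of T_CR around any hexagon vanishes: Σ_τ τ·T_CR(a_τ) = 0, where a_τ for τ ∈ {±1, ±ρ, ±ρ²} are the boundary edges of the hexagon oriented counterclockwise. -/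
import Mathlib


/- The discrete contour integral of `T_CR` around a hexagon vanishes.
We encode the data around one hexagon: `ρ = e^{iπ/3}`; the boundary edge of
the hexagon with (counterclockwise) direction `τ ∈ {±1, ±ρ, ±ρ²}` carries the
value `t τ`, and the outward edge in direction `τ` carries the value `s τ`.
The four edges adjacent to the boundary edge `a_τ` are `a_{τρ}`, `a_{τρ̄}` (on
the hexagon) and `a^out_{−τρ}`, `a^out_{τρ̄}` (outward). -/

/-- `T_CR` evaluated at the boundary edge `a_τ` of the hexagon:
`T_CR(e) = (4/3)·τ̄²·[T(e) + (ρ̄/4)(T(e_{τρ}) + T(e_{−τρ}))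
                           + (ρ/4)(T(e_{τρ̄}) + T(e_{−τρ̄}))]`. -/
noncomputable def TCR (ρ : ℂ) (t s : ℂ → ℂ) (τ : ℂ) : ℂ :=
  (4 / 3) * (starRingEnd ℂ τ) ^ 2 *
    (t τ + (starRingEnd ℂ ρ) / 4 * (t (τ * ρ) + s (-(τ * ρ)))
         + ρ / 4 * (t (τ * starRingEnd ℂ ρ) + s (τ * starRingEnd ℂ ρ)))

/-- If `T` satisfies the hexagon relation `T(d) − T(a) = T(b) − T(e) = T(f) − T(c)`
(the edges `a,…,f` of the hexagon listed in clockwise order being those of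
directions `1, −ρ², −ρ, −1, ρ², ρ`), then the discrete contour integral of
`T_CR` around the hexagon vanishes: `Σ_τ τ·T_CR(a_τ) = 0`. -/
theorem TCR_contour_integral_hexagon_vanishes (ρ : ℂ)
    (hρ : ρ = Complex.exp (Complex.I * ((Real.pi / 3 : ℝ) : ℂ)))
    (t s : ℂ → ℂ)
    (hhex1 : t (-1) - t 1 = t (-ρ ^ 2) - t (ρ ^ 2))
    (hhex2 : t (-ρ ^ 2) - t (ρ ^ 2) = t ρ - t (-ρ)) :
    1 * TCR ρ t s 1 + ρ * TCR ρ t s ρ + ρ ^ 2 * TCR ρ t s (ρ ^ 2)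
      + (-1) * TCR ρ t s (-1) + (-ρ) * TCR ρ t s (-ρ)
      + (-ρ ^ 2) * TCR ρ t s (-ρ ^ 2) = 0 := by
  have hρ' : ρ = (1 / 2 : ℂ) + ((Real.sqrt 3 : ℝ) : ℂ) / 2 * Complex.I := by
    rw [hρ, mul_comm, Complex.exp_mul_I, ← Complex.ofReal_cos, ← Complex.ofReal_sin,
      Real.cos_pi_div_three, Real.sin_pi_div_three]
    push_cast
    ring
  have hx : ((Real.sqrt 3 : ℝ) : ℂ) ^ 2 = 3 := by
    norm_cast
    exact Real.sq_sqrt (by norm_num)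
  have h2 : ρ ^ 2 = ρ - 1 := by
    rw [hρ']
    linear_combination (((Real.sqrt 3 : ℝ) : ℂ) ^ 2 / 4) * Complex.I_sq - (1 / 4) * hx
  have hc : starRingEnd ℂ ρ = 1 - ρ := by
    rw [hρ']
    simp only [map_add, map_mul, map_div₀, Complex.conj_I, Complex.conj_ofReal, map_one,
      map_ofNat]
    ring
  simp only [TCR, map_neg, map_pow, map_one, hc]
  rw [show (1 : ℂ) * ρ = ρ by ring,
      show (1 : ℂ) * (1 - ρ) = -ρ ^ 2 by linear_combination h2,
      show ρ * ρ = ρ ^ 2 by ring,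
      show ρ * (1 - ρ) = 1 by linear_combination -h2,
      show ρ ^ 2 * ρ = -1 by linear_combination (ρ + 1) * h2,
      show (-1 : ℂ) * ρ = -ρ by ring,
      show ρ ^ 2 * (1 - ρ) = ρ by linear_combination (-ρ) * h2,
      show (-1 : ℂ) * (1 - ρ) = ρ ^ 2 by linear_combination -h2,
      show -ρ * ρ = -ρ ^ 2 by ring,
      show -ρ * (1 - ρ) = -1 by linear_combination h2,
      show -ρ ^ 2 * ρ = 1 by linear_combination (-(ρ + 1)) * h2,
      show -ρ ^ 2 * (1 - ρ) = -ρ by linear_combination ρ * h2]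
  simp only [neg_neg]
  linear_combination (-2 : ℂ) * hhex1 + (2 * ρ - 2) * hhex2
    + ((2/3 * ρ^2 - 5/3 * ρ^3 + 4/3 * ρ^4 - 1/3 * ρ^5) * s 1
      + (-2/3 * ρ^2 + 5/3 * ρ^3 - 4/3 * ρ^4 + 1/3 * ρ^5) * s (-1)
      + (1/3 - 1/3 * ρ^2 - 2/3 * ρ^3 + ρ^4 - 1/3 * ρ^5) * s (-ρ)
      + (2/3 * ρ - 1/3 * ρ^2) * s (-ρ ^ 2)
      + (-1/3 + 1/3 * ρ^2 + 2/3 * ρ^3 - ρ^4 + 1/3 * ρ^5) * s ρ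
      + (-2/3 * ρ + 1/3 * ρ^2) * s (ρ ^ 2)
      + (-2/3 - 2/3 * ρ + 5/3 * ρ^3 - 4/3 * ρ^4 + 1/3 * ρ^5) * t 1
      + (2/3 + 2/3 * ρ - 5/3 * ρ^3 + 4/3 * ρ^4 - 1/3 * ρ^5) * t (-1)
      + (5/3 - 4/3 * ρ - 1/3 * ρ^2 - 2/3 * ρ^3 + ρ^4 - 1/3 * ρ^5) * t (-ρ)
      + (-2 * ρ - 7/3 * ρ^2 + 4 * ρ^3 - 4/3 * ρ^4) * t (-ρ ^ 2)
      + (-5/3 + 4/3 * ρ + 1/3 * ρ^2 + 2/3 * ρ^3 - ρ^4 + 1/3 * ρ^5) * t ρ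
      + (2 * ρ + 7/3 * ρ^2 - 4 * ρ^3 + 4/3 * ρ^4) * t (ρ ^ 2)) * h2
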